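/- arXiv:1601.05080 — 2 statements merged into one kernel-verified Lean document; each statement's English description precedes it below -/
import Mathlib

section
/- For any tiling T of a convex n-gon, the Scott permutation σ = Scott(T) has no fixed points: σ(i) ≠ i for all vertices i. -/
open scoped Classical

/-!  Combinatorial model of tilings of a convex `n`-gon.
The vertices of the polygon are `ZMod n`, listed clockwise as `0,1,...,n-1`.
A tile is recorded as the finset of its vertices. -/

/-- The next vertex of `Q` strictly clockwise after `a`. -/
noncomputable def cnext (n : ℕ) (Q : Finset (ZMod n)) (a : ZMod n) : ZMod n :=
  if h : ∃ k : ℕ, 0 < k ∧ k ≤ n ∧ a + (k : ZMod n) ∈ Q then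
    a + ((Nat.find h : ℕ) : ZMod n)
  else a

/-- The previous vertex of `Q` strictly anticlockwise before `a`. -/
noncomputable def cprev (n : ℕ) (Q : Finset (ZMod n)) (a : ZMod n) : ZMod n :=
  if h : ∃ k : ℕ, 0 < k ∧ k ≤ n ∧ a - (k : ZMod n) ∈ Q then
    a - ((Nat.find h : ℕ) : ZMod n)
  else a

/-- `(a,b)` is a (directed, clockwise) edge of the tile `Q`:
`b` is the next vertex of `Q` clockwise after `a`. -/
noncomputable def IsEdge (n : ℕ) (Q : Finset (ZMod n)) (a b : ZMod n) : Prop :=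
  a ∈ Q ∧ b ∈ Q ∧ a ≠ b ∧ b = cnext n Q a

/-- `x` lies strictly inside the clockwise arc from `a` to `b`. -/
def Between (n : ℕ) (a x b : ZMod n) : Prop :=
  0 < (x - a).val ∧ (x - a).val < (b - a).val

/-- The chords `{a,b}` and `{c,d}` of a convex `m`-gon cross in its interior. -/
def Crosses (m : ℕ) (a b c d : ZMod m) : Prop :=
  Between m a c b ∧ Between m b d a

/-- A tiling of the convex `n`-gon by pairwise non-crossing diagonals, recorded by
its set of tiles.  Every tile has at least 3 vertices, every boundary edge
`[i,i+1]` is an edge of exactly one tile, every diagonal (non-boundary edge of a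
tile) is shared with exactly one other tile (traversed in the opposite
direction), two distinct tiles meet in at most one edge, and edges of tiles do
not cross. -/
structure PolygonTiling (n : ℕ) where
  tiles : Finset (Finset (ZMod n))
  three_le : ∀ Q ∈ tiles, 3 ≤ Q.card
  boundary_edge : ∀ i : ZMod n, ∃! Q, Q ∈ tiles ∧ IsEdge n Q i (i + 1)
  diag_shared : ∀ Q ∈ tiles, ∀ a b : ZMod n, IsEdge n Q a b → b ≠ a + 1 →
    ∃! Q', Q' ∈ tiles ∧ Q' ≠ Q ∧ IsEdge n Q' b a
  inter_small : ∀ Q ∈ tiles, ∀ Q' ∈ tiles, Q ≠ Q' → (Q ∩ Q').card ≤ 2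
  noncross : ∀ Q ∈ tiles, ∀ Q' ∈ tiles, ∀ a b c d : ZMod n,
    IsEdge n Q a b → IsEdge n Q' c d → ¬ Crosses n a b c d

/-- The set of diagonals of a tiling, as unordered pairs of vertices. -/
def diagonalsSet (n : ℕ) (T : PolygonTiling n) : Set (Finset (ZMod n)) :=
  {e | ∃ Q ∈ T.tiles, ∃ a b : ZMod n, IsEdge n Q a b ∧ b ≠ a + 1 ∧ e = {a, b}}

/-- One step of Scott's strand construction.  A state `(Q, a)` means the strand is
entering tile `Q` through its directed edge `(a, cnext Q a)`.  Inside `Q` the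
strand uses the segment parallel to the edge `[cprev Q a, a]`, oriented from `a`
towards `p := cprev Q a`, leaving `Q` through the edge `(pp, p)` where
`pp := cprev Q p`.  If that edge is a boundary edge the strand terminates at the
vertex `p`; otherwise it continues into the unique other tile having this edge. -/
noncomputable def scottStep (n : ℕ) (T : PolygonTiling n) :
    Finset (ZMod n) × ZMod n → (Finset (ZMod n) × ZMod n) ⊕ ZMod n := fun s =>
  let Q := s.1
  let a := s.2
  let p := cprev n Q a
  let pp := cprev n Q p
  if p = pp + 1 then Sum.inr p
  else if h : ∃ Q', Q' ∈ T.tiles ∧ Q' ≠ Q ∧ IsEdge n Q' p pp then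
    Sum.inl (Classical.choose h, p)
  else Sum.inr p

/-- The tile in which the strand starting at vertex `x` begins: the unique tile
containing the boundary edge `(x, x+1)`. -/
noncomputable def startTile (n : ℕ) (T : PolygonTiling n) (x : ZMod n) :
    Finset (ZMod n) :=
  Classical.choose (T.boundary_edge x)

/-- The sequence of states of the strand starting at vertex `x`
(`none` after the strand has terminated). -/
noncomputable def strandSeq (n : ℕ) (T : PolygonTiling n) (x : ZMod n) :
    ℕ → Option (Finset (ZMod n) × ZMod n)
  | 0 => some (startTile n T x, x)
  | k + 1 =>
    match strandSeq n T x k with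
    | none => none
    | some s =>
      match scottStep n T s with
      | Sum.inl s' => some s'
      | Sum.inr _ => none

/-- The strand starting at `x` uses a strand segment of tile `Q`, entering `Q`
in state `s = (Q, a)`. -/
def StrandVisits (n : ℕ) (T : PolygonTiling n) (x : ZMod n)
    (s : Finset (ZMod n) × ZMod n) : Prop :=
  ∃ k : ℕ, strandSeq n T x k = some s

/-- Follow a strand for at most `fuel` steps, returning its final vertex. -/
noncomputable def scottRun (n : ℕ) (T : PolygonTiling n) :
    ℕ → Finset (ZMod n) × ZMod n → ZMod n
  | 0, s => s.2
  | k + 1, s =>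
    match scottStep n T s with
    | Sum.inr y => y
    | Sum.inl s' => scottRun n T k s'

/-- The Scott map of the tiling `T`: the strand starting at vertex `x` ends at
vertex `scott n T x`.  (A strand uses at most one segment per tile, so
`T.tiles.card` steps always suffice.) -/
noncomputable def scott (n : ℕ) (T : PolygonTiling n) (x : ZMod n) : ZMod n :=
  scottRun n T T.tiles.card (startTile n T x, x)

/-- A triangulation: all tiles are triangles. -/
def IsTriangulation (n : ℕ) (T : PolygonTiling n) : Prop :=
  ∀ Q ∈ T.tiles, Q.card = 3

/-- An ear of a tiling: a tile exactly one of whose edges is a diagonal. -/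
noncomputable def IsEar (n : ℕ) (T : PolygonTiling n) (Q : Finset (ZMod n)) : Prop :=
  Q ∈ T.tiles ∧ ∃! p : ZMod n × ZMod n, IsEdge n Q p.1 p.2 ∧ p.2 ≠ p.1 + 1

/-- A vertex is simple if it is not an endpoint of any diagonal. -/
def IsSimpleVertex (n : ℕ) (T : PolygonTiling n) (v : ZMod n) : Prop :=
  ∀ e ∈ diagonalsSet n T, v ∉ e

/-- The open dual graph of a tiling: one vertex per tile, two tiles adjacent iff
they share a diagonal. -/
noncomputable def dualGraph (n : ℕ) (T : PolygonTiling n) :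
    SimpleGraph {Q // Q ∈ T.tiles} where
  Adj Q Q' := Q ≠ Q' ∧ ∃ a b : ZMod n, b ≠ a + 1 ∧
    ((IsEdge n Q.1 a b ∧ IsEdge n Q'.1 b a) ∨ (IsEdge n Q.1 b a ∧ IsEdge n Q'.1 a b))
  symm := by
    constructor
    rintro Q Q' ⟨hne, a, b, hb, h⟩
    refine ⟨hne.symm, a, b, hb, ?_⟩
    rcases h with ⟨h1, h2⟩ | ⟨h1, h2⟩
    · exact Or.inr ⟨h2, h1⟩
    · exact Or.inl ⟨h2, h1⟩
  loopless := by constructor; rintro Q ⟨hne, -⟩; exact hne rfl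

/-- `T'` is obtained from `T` by a single flip: a quadrilateral `a,b,c,d`
(clockwise) tiled by the triangles `{a,b,c}, {a,c,d}` (diagonal `[a,c]`) is
retiled by the triangles `{a,b,d}, {b,c,d}` (diagonal `[b,d]`). -/
def FlipStep (n : ℕ) (T T' : PolygonTiling n) : Prop :=
  ∃ a b c d : ZMod n, Between n a b c ∧ Between n c d a ∧
    ({a, b, c} : Finset (ZMod n)) ∈ T.tiles ∧ ({a, c, d} : Finset (ZMod n)) ∈ T.tiles ∧
    T'.tiles = (T.tiles \ {({a, b, c} : Finset (ZMod n)), {a, c, d}}) ∪ {{a, b, d}, {b, c, d}}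

/-- Flip equivalence: the equivalence relation generated by flips. -/
def FlipEquiv (n : ℕ) (T T' : PolygonTiling n) : Prop :=
  Relation.EqvGen (FlipStep n) T T'

/-- The midpoint of the (clockwise) tile edge starting at vertex `a`, recorded as
a vertex of the refined `2n`-gon (vertex `v` of the polygon becomes `2v`). -/
def midpt (n : ℕ) (a : ZMod n) : ZMod (2 * n) := ((2 * a.val + 1 : ℕ) : ZMod (2 * n))

/-- The first vertex of the edge through which the strand segment entering tile `Q`
in state `(Q,a)` leaves `Q`. -/
noncomputable def segTarget (n : ℕ) (Q : Finset (ZMod n)) (a : ZMod n) : ZMod n :=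
  cprev n Q (cprev n Q a)

/-- The strand segments of tile `Q` entering in states `(Q,a)` and `(Q,c)` cross
inside `Q` (their chords, joining midpoints of edges of `Q`, interleave). -/
noncomputable def SegCross (n : ℕ) (Q : Finset (ZMod n)) (a c : ZMod n) : Prop :=
  Crosses (2 * n) (midpt n a) (midpt n (segTarget n Q a))
    (midpt n c) (midpt n (segTarget n Q c))

/-- The set of tiles inside which the strands starting at `x` and at `y` cross. -/
noncomputable def crossingTiles (n : ℕ) (T : PolygonTiling n) (x y : ZMod n) :
    Set (Finset (ZMod n)) :=
  {Q | Q ∈ T.tiles ∧ ∃ a c : ZMod n,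
    StrandVisits n T x (Q, a) ∧ StrandVisits n T y (Q, c) ∧ SegCross n Q a c}

/-- `v` lies on the closed clockwise arc from `i` to `j`. -/
def InArc (n : ℕ) (i j v : ZMod n) : Prop := (v - i).val ≤ (j - i).val

/-! The strand starting at `i` stays aimed at `i`: whenever it enters a tile `Q` through the
edge `(a, cnext Q a)`, the vertex `i` lies on the clockwise arc `[a, cnext Q a)` cut off by that
edge (initially `a = i` and the arc is `[i, i + 1)`). The strand then leaves `Q` through the edge
ending at `p = cprev Q a`, whose clockwise arc from `p` contains the arc from `p` to `a` followed
by `[a, cnext Q a)`. Hence `i` lies strictly inside the new arc, so the exit vertex `p` is never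
`i` and the strand remains aimed at `i` in the next tile. -/

section

variable {n : ℕ}

theorem ZMod.val_sub_add_val_sub_of_ne [NeZero n] {a b : ZMod n} (h : a ≠ b) :
    (a - b).val + (b - a).val = n := by
  rw [← neg_sub a b, ZMod.neg_val, if_neg (sub_ne_zero.mpr h)]
  have := ZMod.val_lt (a - b)
  omega

open Pointwise in
theorem cprev_eq_neg_cnext_neg (Q : Finset (ZMod n)) (a : ZMod n) :
    cprev n Q a = -cnext n (-Q) (-a) := by
  have hfind : (fun k : ℕ => 0 < k ∧ k ≤ n ∧ -a + (k : ZMod n) ∈ -Q) =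
      fun k : ℕ => 0 < k ∧ k ≤ n ∧ a - (k : ZMod n) ∈ Q := by
    funext k
    rw [Finset.mem_neg', neg_add, neg_neg, ← sub_eq_add_neg]
  unfold cprev cnext
  simp only [hfind]
  split_ifs <;> abel

variable [NeZero n] {Q : Finset (ZMod n)} {a : ZMod n}

theorem cnext_spec (hQ : 1 < Q.card) (ha : a ∈ Q) :
    cnext n Q a ∈ Q ∧ cnext n Q a ≠ a ∧
      ∀ x ∈ Q, x ≠ a → (cnext n Q a - a).val ≤ (x - a).val := by
  have hex : ∃ k : ℕ, 0 < k ∧ k ≤ n ∧ a + (k : ZMod n) ∈ Q :=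
    ⟨n, NeZero.pos n, le_rfl, by simpa using ha⟩
  have hle : ∀ x ∈ Q, x ≠ a → Nat.find hex ≤ (x - a).val := fun x hx hxa =>
    Nat.find_min' hex ⟨ZMod.val_pos.mpr (sub_ne_zero.mpr hxa), (ZMod.val_lt _).le,
      by simpa using hx⟩
  obtain ⟨x, hx, hxa⟩ := Finset.exists_mem_ne hQ a
  have hval : (Nat.find hex : ZMod n).val = Nat.find hex :=
    ZMod.val_cast_of_lt ((hle x hx hxa).trans_lt (ZMod.val_lt _))
  obtain ⟨hpos, -, hmem⟩ := Nat.find_spec hex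
  have hcnext : cnext n Q a = a + Nat.find hex := dif_pos hex
  rw [hcnext, add_sub_cancel_left, hval]
  refine ⟨hmem, fun h => ?_, hle⟩
  rw [add_eq_left, ← ZMod.val_eq_zero, hval] at h
  omega

open Pointwise in
theorem cprev_spec (hQ : 1 < Q.card) (ha : a ∈ Q) :
    cprev n Q a ∈ Q ∧ cprev n Q a ≠ a ∧
      ∀ x ∈ Q, x ≠ a → (a - cprev n Q a).val ≤ (a - x).val := by
  obtain ⟨hmem, hne, hle⟩ :=
    cnext_spec (Q := -Q) (by rwa [Finset.card_neg]) (Finset.neg_mem_neg ha)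
  rw [cprev_eq_neg_cnext_neg]
  refine ⟨Finset.mem_neg'.mp hmem, fun h => hne (neg_eq_iff_eq_neg.mp h), fun x hx hxa => ?_⟩
  simpa [sub_eq_add_neg, add_comm] using
    hle (-x) (Finset.neg_mem_neg hx) (neg_injective.ne hxa)

theorem val_sub_le_val_cprev_sub (hQ : 1 < Q.card) (ha : a ∈ Q) {x : ZMod n} (hx : x ∈ Q)
    (hxa : x ≠ a) : (x - a).val ≤ (cprev n Q a - a).val := by
  obtain ⟨-, hpa, hle⟩ := cprev_spec hQ ha
  have := hle x hx hxa
  have := ZMod.val_sub_add_val_sub_of_ne hxa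
  have := ZMod.val_sub_add_val_sub_of_ne hpa
  omega

theorem cnext_ne_cprev (hQ : 3 ≤ Q.card) (ha : a ∈ Q) : cnext n Q a ≠ cprev n Q a := by
  intro h
  obtain ⟨-, hba, hnext⟩ := cnext_spec (by omega) ha
  obtain ⟨-, -, hprev⟩ := cprev_spec (by omega) ha
  rw [← h] at hprev
  have hQ2 : Q ⊆ {a, cnext n Q a} := by
    intro x hx
    rw [Finset.mem_insert, Finset.mem_singleton, or_iff_not_imp_left]
    intro hxa
    -- the clockwise and anticlockwise distances from `a` to `x` are both minimal and sum to `n`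
    have := hnext x hx hxa
    have := hprev x hx hxa
    have := ZMod.val_sub_add_val_sub_of_ne hxa
    have := ZMod.val_sub_add_val_sub_of_ne hba
    exact sub_left_injective
      (ZMod.val_injective n (show (x - a).val = (cnext n Q a - a).val by omega))
  have := (Finset.card_le_card hQ2).trans Finset.card_le_two
  omega

theorem val_sub_cprev_add_val_cnext_sub_le (hQ : 3 ≤ Q.card) (ha : a ∈ Q) :
    (a - cprev n Q a).val + (cnext n Q a - a).val ≤ (segTarget n Q a - cprev n Q a).val := by
  obtain ⟨hb, hba, -⟩ := cnext_spec (by omega) ha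
  obtain ⟨hp, -, hprev⟩ := cprev_spec (by omega) ha
  have hbp := cnext_ne_cprev hQ ha
  set p := cprev n Q a
  set b := cnext n Q a
  have hlt : (a - p).val < (a - b).val :=
    (hprev b hb hba).lt_of_ne fun h => hbp (sub_right_injective (ZMod.val_injective n h)).symm
  have := ZMod.val_sub_add_val_sub_of_ne hba
  have hbp_val : (b - p).val = (a - p).val + (b - a).val := by
    rw [← ZMod.val_add_of_lt (by omega), sub_add_sub_cancel']
  exact hbp_val ▸ val_sub_le_val_cprev_sub (by omega) hp hb hbp

theorem between_cprev_segTarget (hQ : 3 ≤ Q.card) (ha : a ∈ Q) {i : ZMod n}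
    (hi : (i - a).val < (cnext n Q a - a).val) :
    Between n (cprev n Q a) i (segTarget n Q a) := by
  obtain ⟨-, hpa, -⟩ := cprev_spec (by omega) ha
  have := val_sub_cprev_add_val_cnext_sub_le hQ ha
  have := ZMod.val_pos.mpr (sub_ne_zero.mpr hpa.symm)
  have := ZMod.val_lt (segTarget n Q a - cprev n Q a)
  have hip : (i - cprev n Q a).val = (a - cprev n Q a).val + (i - a).val := by
    rw [← ZMod.val_add_of_lt (by omega), sub_add_sub_cancel']
  constructor <;> omega

end

theorem scottStep_eq_inr_or_inl {n : ℕ} (T : PolygonTiling n) (Q : Finset (ZMod n))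
    (a : ZMod n) :
    scottStep n T (Q, a) = .inr (cprev n Q a) ∨
      ∃ Q' ∈ T.tiles, IsEdge n Q' (cprev n Q a) (segTarget n Q a) ∧
        scottStep n T (Q, a) = .inl (Q', cprev n Q a) := by
  dsimp only [scottStep]
  split_ifs with hboundary hdiag
  · exact .inl rfl
  · obtain ⟨hmem, -, hedge⟩ := Classical.choose_spec hdiag
    exact .inr ⟨_, hmem, hedge, rfl⟩
  · exact .inl rfl

section

variable {n : ℕ} [NeZero n] (T : PolygonTiling n)

theorem scottStep_of_lt_cnext {Q : Finset (ZMod n)} (hQ : Q ∈ T.tiles) {a i : ZMod n}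
    (ha : a ∈ Q) (hi : (i - a).val < (cnext n Q a - a).val) :
    ∃ p ≠ i, scottStep n T (Q, a) = .inr p ∨
      ∃ Q' ∈ T.tiles, p ∈ Q' ∧ (i - p).val < (cnext n Q' p - p).val ∧
        scottStep n T (Q, a) = .inl (Q', p) := by
  have hbet := between_cprev_segTarget (T.three_le Q hQ) ha hi
  have hpi : cprev n Q a ≠ i := fun h => by simp [Between, h] at hbet
  refine ⟨cprev n Q a, hpi, ?_⟩
  rcases scottStep_eq_inr_or_inl T Q a with h | ⟨Q', hQ', ⟨hp, -, -, hnext⟩, h⟩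
  · exact .inl h
  · exact .inr ⟨Q', hQ', hp, hnext ▸ hbet.2, h⟩

theorem scottRun_succ_ne {i : ZMod n} (k : ℕ) :
    ∀ {Q : Finset (ZMod n)} {a : ZMod n}, Q ∈ T.tiles → a ∈ Q →
      (i - a).val < (cnext n Q a - a).val → scottRun n T (k + 1) (Q, a) ≠ i := by
  induction k with
  | zero =>
    intro Q a hQ ha hi
    obtain ⟨p, hpi, h | ⟨Q', -, -, -, h⟩⟩ := scottStep_of_lt_cnext T hQ ha hi <;>
      rwa [scottRun, h]
  | succ k ih =>
    intro Q a hQ ha hi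
    obtain ⟨p, hpi, h | ⟨Q', hQ', hp, hi', h⟩⟩ := scottStep_of_lt_cnext T hQ ha hi
    · rwa [scottRun, h]
    · rw [scottRun, h]
      exact ih hQ' hp hi'

end

theorem stmt8 (n : ℕ) (hn : 3 ≤ n) (T : PolygonTiling n) (i : ZMod n) :
    scott n T i ≠ i := by
  have : NeZero n := ⟨by omega⟩
  obtain ⟨hQ, hi, -, hne, hnext⟩ :
      startTile n T i ∈ T.tiles ∧ IsEdge n (startTile n T i) i (i + 1) :=
    (Classical.choose_spec (T.boundary_edge i)).1
  obtain ⟨m, hm⟩ := Nat.exists_eq_add_one_of_ne_zero (Finset.card_ne_zero_of_mem hQ)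
  rw [scott, hm]
  refine scottRun_succ_ne T m hQ hi ?_
  rw [← hnext, sub_self, ZMod.val_zero, ZMod.val_pos, sub_ne_zero]
  exact hne.symm
end

section
/- For every triangulation T of a convex n-gon, the Scott permutation Scott(T) is the map i ↦ i + 2 (mod n); conversely, if Scott(T) equals i ↦ i+2 (mod n) for a tiling T, then T is a triangulation. -/
open scoped Classical

/-!
Measure positions clockwise from the starting vertex `x` of a strand by `arcLen x`, which takes
the values `1, …, n`, with `x` itself at `n`. Every tile `Q` on the strand from `x` is entered
through the edge `(a, b)`, `b = cnext Q a`, that separates it from `x`; the vertices of `Q` then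
sit at positions from that of `b` up to that of `a`, and the strand leaves through the edge joining
the two highest of them below `a`. So the position of `b` grows by at least `|Q| - 3` in each tile
and stays put in a triangle: the strand ends at position at least `2 + Σ (|Q| - 3)`, and exactly at
`2` in a triangulation. Conversely every tile is crossed by some strand, since following strands
backwards across diagonals shortens the entry edge, so a tile with four or more vertices makes some
strand end at position at least `3`, not at `x + 2`.
-/

/-- Number of boundary edges on the clockwise arc from `x` to `v`; a full turn `n` when `v = x`,
so that `arcLen x` takes values in `[1, n]` and is maximal at `x` itself. -/
def arcLen {n : ℕ} (x v : ZMod n) : ℕ := (v - x - 1).val + 1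

section ArcLength

variable {n : ℕ} {x v w : ZMod n}

lemma one_le_arcLen : 1 ≤ arcLen x v := Nat.le_add_left 1 _

lemma arcLen_add_one_self (x : ZMod n) : arcLen x (x + 1) = 1 := by
  simp [arcLen]

lemma arcLen_eq_of_natCast_eq {k : ℕ} (hk : 1 ≤ k) (hkn : k ≤ n) (h : (k : ZMod n) = v - x) :
    arcLen x v = k := by
  have hsub : v - x - 1 = ((k - 1 : ℕ) : ZMod n) := by rw [Nat.cast_sub hk, h, Nat.cast_one]
  rw [arcLen, hsub, ZMod.val_cast_of_lt (by omega)]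
  omega

variable [NeZero n]

lemma arcLen_le : arcLen x v ≤ n := ZMod.val_lt _

lemma natCast_arcLen : (arcLen x v : ZMod n) = v - x := by
  simp [arcLen]

lemma arcLen_injective (x : ZMod n) : Function.Injective (arcLen x) := fun u v h => by
  have h' := congrArg (Nat.cast : ℕ → ZMod n) h
  rwa [natCast_arcLen, natCast_arcLen, sub_left_inj] at h'

lemma arcLen_self (x : ZMod n) : arcLen x x = n :=
  arcLen_eq_of_natCast_eq NeZero.one_le le_rfl (by simp)

lemma arcLen_lt_iff : arcLen x v < n ↔ v ≠ x := by
  refine ⟨fun h hvx => by rw [hvx, arcLen_self] at h; exact h.false, fun h => ?_⟩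
  refine lt_of_le_of_ne arcLen_le fun heq => h (arcLen_injective x ?_)
  rw [heq, arcLen_self]

lemma arcLen_add_one (h : arcLen x v < n) : arcLen x (v + 1) = arcLen x v + 1 :=
  arcLen_eq_of_natCast_eq (by omega) h (by push_cast; rw [natCast_arcLen]; ring)

lemma arcLen_add_arcLen (x v w : ZMod n) :
    arcLen x v + arcLen v w = arcLen x w ∨ arcLen x v + arcLen v w = arcLen x w + n := by
  have hsum : ((arcLen x v + arcLen v w : ℕ) : ZMod n) = w - x := by
    push_cast
    rw [natCast_arcLen, natCast_arcLen]
    ring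
  have h₁ : 1 ≤ arcLen x v := one_le_arcLen
  have h₂ : arcLen v w ≤ n := arcLen_le
  have h₃ : arcLen x v ≤ n := arcLen_le
  by_cases hle : arcLen x v + arcLen v w ≤ n
  · exact Or.inl (arcLen_eq_of_natCast_eq (by omega) hle hsum).symm
  · refine Or.inr ?_
    have := arcLen_eq_of_natCast_eq (x := x) (v := w) (k := arcLen x v + arcLen v w - n)
      (by omega) (by omega) (by rw [Nat.cast_sub (by omega), hsum, ZMod.natCast_self, sub_zero])
    omega

end ArcLength

lemma Finset.exists_mem_ne_ne {α : Type*} [DecidableEq α] {s : Finset α} (hs : 3 ≤ s.card)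
    (a b : α) : ∃ c ∈ s, c ≠ a ∧ c ≠ b := by
  obtain ⟨c, hc, hcab⟩ := exists_mem_notMem_of_card_lt_card
    (lt_of_le_of_lt (Finset.card_le_two (a := a) (b := b)) hs)
  simp only [Finset.mem_insert, Finset.mem_singleton, not_or] at hcab
  exact ⟨c, hc, hcab⟩

section TileGeometry

variable {n : ℕ} [NeZero n] {Q : Finset (ZMod n)} {x a v w c d : ZMod n}

lemma cnext_spec_s11 (hc : c ∈ Q) :
    cnext n Q v ∈ Q ∧ ∀ d ∈ Q, arcLen v (cnext n Q v) ≤ arcLen v d := by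
  have key : ∀ d ∈ Q, 0 < arcLen v d ∧ arcLen v d ≤ n ∧ v + (arcLen v d : ZMod n) ∈ Q :=
    fun d hd => ⟨one_le_arcLen, arcLen_le, by rwa [natCast_arcLen, add_sub_cancel]⟩
  have hex : ∃ k : ℕ, 0 < k ∧ k ≤ n ∧ v + (k : ZMod n) ∈ Q := ⟨_, key c hc⟩
  have hdef : cnext n Q v = v + (Nat.find hex : ZMod n) := by rw [cnext, dif_pos hex]
  obtain ⟨hpos, hle, hmem⟩ := Nat.find_spec hex
  have hlen : arcLen v (cnext n Q v) = Nat.find hex :=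
    arcLen_eq_of_natCast_eq hpos hle (by rw [hdef, add_sub_cancel_left])
  exact ⟨hdef ▸ hmem, fun d hd => hlen ▸ Nat.find_min' hex (key d hd)⟩

lemma cprev_spec_s11 (hc : c ∈ Q) :
    cprev n Q v ∈ Q ∧ ∀ d ∈ Q, arcLen (cprev n Q v) v ≤ arcLen d v := by
  have key : ∀ d ∈ Q, 0 < arcLen d v ∧ arcLen d v ≤ n ∧ v - (arcLen d v : ZMod n) ∈ Q :=
    fun d hd => ⟨one_le_arcLen, arcLen_le, by rwa [natCast_arcLen, sub_sub_cancel]⟩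
  have hex : ∃ k : ℕ, 0 < k ∧ k ≤ n ∧ v - (k : ZMod n) ∈ Q := ⟨_, key c hc⟩
  have hdef : cprev n Q v = v - (Nat.find hex : ZMod n) := by rw [cprev, dif_pos hex]
  obtain ⟨hpos, hle, hmem⟩ := Nat.find_spec hex
  have hlen : arcLen (cprev n Q v) v = Nat.find hex :=
    arcLen_eq_of_natCast_eq hpos hle (by rw [hdef, sub_sub_cancel])
  exact ⟨hdef ▸ hmem, fun d hd => hlen ▸ Nat.find_min' hex (key d hd)⟩

lemma isEdge_cnext (hv : v ∈ Q) (hc : c ∈ Q) (hcv : c ≠ v) : IsEdge n Q v (cnext n Q v) := by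
  obtain ⟨hmem, hmin⟩ := cnext_spec_s11 (v := v) hc
  have hlt : arcLen v (cnext n Q v) < n := (hmin c hc).trans_lt (arcLen_lt_iff.mpr hcv)
  exact ⟨hv, hmem, (arcLen_lt_iff.mp hlt).symm, rfl⟩

lemma cprev_cnext (hv : v ∈ Q) : cprev n Q (cnext n Q v) = v := by
  obtain ⟨hw, hwmin⟩ := cnext_spec_s11 (v := v) hv
  obtain ⟨hp, hpmin⟩ := cprev_spec_s11 (v := cnext n Q v) hv
  by_contra hpv
  have := hwmin _ hp
  have := hpmin v hv
  have := arcLen_lt_iff.mpr hpv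
  have := (one_le_arcLen : 1 ≤ arcLen (cprev n Q (cnext n Q v)) (cnext n Q v))
  rcases arcLen_add_arcLen v (cprev n Q (cnext n Q v)) (cnext n Q v) with h' | h' <;> omega

lemma cnext_cprev (hv : v ∈ Q) : cnext n Q (cprev n Q v) = v := by
  obtain ⟨hp, hpmin⟩ := cprev_spec_s11 (v := v) hv
  obtain ⟨hw, hwmin⟩ := cnext_spec_s11 (v := cprev n Q v) hv
  by_contra hwv
  have := hwmin v hv
  have := hpmin _ hw
  have := arcLen_lt_iff.mpr (Ne.symm hwv)
  have := (one_le_arcLen : 1 ≤ arcLen (cprev n Q v) (cnext n Q (cprev n Q v)))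
  rcases arcLen_add_arcLen (cprev n Q v) (cnext n Q (cprev n Q v)) v with h' | h' <;> omega

/-- No vertex of `Q` lies strictly inside the clockwise arc from `v` to `w = cnext Q v`. -/
lemma arcLen_le_of_cnext_eq (h : cnext n Q v = w) (hvw : v ≠ w) (hc : c ∈ Q) (hcw : c ≠ w) :
    arcLen w c ≤ arcLen w v := by
  have := (cnext_spec_s11 (v := v) hc).2 c hc
  rw [h] at this
  have := arcLen_lt_iff.mpr hvw
  have := arcLen_lt_iff.mpr hcw
  have := (arcLen_le : arcLen v c ≤ n)
  have := arcLen_self w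
  rcases arcLen_add_arcLen w v c with h₁ | h₁ <;>
    rcases arcLen_add_arcLen w v w with h₂ | h₂ <;> omega

lemma arcLen_cprev_mem_Ico (hd : d ∈ Q) (hdv : arcLen x d < arcLen x v) :
    arcLen x (cprev n Q v) ∈ Set.Ico (arcLen x d) (arcLen x v) := by
  have := (cprev_spec_s11 (v := v) hd).2 d hd
  have := (arcLen_le : arcLen d v ≤ n)
  have := (arcLen_le : arcLen x (cprev n Q v) ≤ n)
  have := (one_le_arcLen : 1 ≤ arcLen (cprev n Q v) v)
  have := (one_le_arcLen : 1 ≤ arcLen x d)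
  constructor <;>
  rcases arcLen_add_arcLen x d v with h₁ | h₁ <;>
    rcases arcLen_add_arcLen x (cprev n Q v) v with h₂ | h₂ <;> omega

lemma arcLen_mem_Icc_of_arcLen_cnext_lt (hb : arcLen x (cnext n Q a) < arcLen x a)
    (hc : c ∈ Q) :
    arcLen x c ∈ Set.Icc (arcLen x (cnext n Q a)) (arcLen x a) := by
  have := (cnext_spec_s11 (v := a) hc).2 c hc
  have := (arcLen_le : arcLen a c ≤ n)
  have := (arcLen_le : arcLen x c ≤ n)
  have := (one_le_arcLen : 1 ≤ arcLen x (cnext n Q a))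
  constructor <;>
  rcases arcLen_add_arcLen x a c with h₁ | h₁ <;>
    rcases arcLen_add_arcLen x a (cnext n Q a) with h₂ | h₂ <;> omega

lemma card_le_of_arcLen_mem_Icc {S : Finset (ZMod n)} {lo hi : ℕ}
    (h : ∀ c ∈ S, arcLen x c ∈ Finset.Icc lo hi) : S.card ≤ hi + 1 - lo := by
  simpa using Finset.card_le_card_of_injOn (arcLen x) (fun c hc => h c hc)
    (arcLen_injective x).injOn

/-- When `Q` is entered through the wrapping edge `(a, b)`, `b = cnext Q a`, its vertices are
`b = q₁, …, qₘ = a` in increasing `arcLen x`, and the exit edge `(cprev (cprev a), cprev a)` is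
`(qₘ₋₂, qₘ₋₁)`. -/
lemma arcLen_cprev_cprev_bounds (ha : a ∈ Q) (hQ : 3 ≤ Q.card)
    (hb : arcLen x (cnext n Q a) < arcLen x a) :
    arcLen x (cprev n Q (cprev n Q a)) < arcLen x (cprev n Q a) ∧
      arcLen x (cprev n Q a) < arcLen x a ∧
      arcLen x (cnext n Q a) + (Q.card - 3) ≤ arcLen x (cprev n Q (cprev n Q a)) ∧
      (Q.card = 3 → cprev n Q (cprev n Q a) = cnext n Q a) := by
  set b := cnext n Q a
  set p := cprev n Q a
  set pp := cprev n Q p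
  have hbQ : b ∈ Q := (cnext_spec_s11 ha).1
  have hpQ : p ∈ Q := (cprev_spec_s11 ha).1
  have hppQ : pp ∈ Q := (cprev_spec_s11 ha).1
  have hbounds (c) (hc : c ∈ Q) : arcLen x c ∈ Set.Icc (arcLen x b) (arcLen x a) :=
    arcLen_mem_Icc_of_arcLen_cnext_lt hb hc
  have hlt_a (c) (hc : c ∈ Q) (hca : c ≠ a) : arcLen x c < arcLen x a :=
    (hbounds c hc).2.lt_of_ne fun h => hca (arcLen_injective x h)
  have hpa : arcLen x p < arcLen x a := (arcLen_cprev_mem_Ico hbQ hb).2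
  have hle_p (c) (hc : c ∈ Q) (hca : c ≠ a) : arcLen x c ≤ arcLen x p :=
    (arcLen_cprev_mem_Ico hc (hlt_a c hc hca)).1
  obtain ⟨c, hc, hca, hcp⟩ := Q.exists_mem_ne_ne hQ a p
  have hcp' : arcLen x c < arcLen x p :=
    (hle_p c hc hca).lt_of_ne fun h => hcp (arcLen_injective x h)
  have hppp : arcLen x pp < arcLen x p := (arcLen_cprev_mem_Ico hc hcp').2
  have hle_pp (d) (hd : d ∈ Q) (hda : d ≠ a) (hdp : d ≠ p) : arcLen x d ≤ arcLen x pp :=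
    (arcLen_cprev_mem_Ico hd <|
      (hle_p d hd hda).lt_of_ne fun h => hdp (arcLen_injective x h)).1
  have hbp : b ≠ p := fun h => by
    have := (hbounds c hc).1
    rw [h] at this
    omega
  have hbS : b ∈ (Q.erase a).erase p := by
    simp only [Finset.mem_erase]
    exact ⟨hbp, fun h => (h ▸ hb).false, hbQ⟩
  have hppS : pp ∈ (Q.erase a).erase p := by
    simp only [Finset.mem_erase]
    exact ⟨fun h => (h ▸ hppp).false, fun h => (h ▸ hppp.trans hpa).false, hppQ⟩
  have hcardS : ((Q.erase a).erase p).card = Q.card - 2 := by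
    rw [Finset.card_erase_of_mem (Finset.mem_erase.mpr ⟨fun h => (h ▸ hpa).false, hpQ⟩),
      Finset.card_erase_of_mem ha]
    omega
  have hcount := card_le_of_arcLen_mem_Icc (S := (Q.erase a).erase p) fun d hd => by
    simp only [Finset.mem_erase] at hd
    exact Finset.mem_Icc.mpr ⟨(hbounds d hd.2.2).1, hle_pp d hd.2.2 hd.2.1 hd.1⟩
  refine ⟨hppp, hpa, by omega, fun h3 => ?_⟩
  exact Finset.card_le_one.mp (by omega) _ hppS _ hbS

end TileGeometry

section Strands

variable {n : ℕ} {T : PolygonTiling n} {x y : ZMod n} {s s' : Finset (ZMod n) × ZMod n}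

def StrandStep (T : PolygonTiling n) (s s' : Finset (ZMod n) × ZMod n) : Prop :=
  scottStep n T s = Sum.inl s'

/-- Fuel-free counterpart of `scottRun`. -/
inductive StrandEnds (T : PolygonTiling n) : Finset (ZMod n) × ZMod n → ZMod n → Prop
  | terminate {s : Finset (ZMod n) × ZMod n} {y : ZMod n} :
      scottStep n T s = Sum.inr y → StrandEnds T s y
  | step {s s' : Finset (ZMod n) × ZMod n} {y : ZMod n} :
      StrandStep T s s' → StrandEnds T s' y → StrandEnds T s y

/-- The state `(Q, a)` is entered, as seen from `x`, through the edge `(a, cnext Q a)` of `Q` that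
separates `Q` from `x` (with `x = a` allowed). This holds along the strand starting at `x`. -/
def Oriented (T : PolygonTiling n) (x : ZMod n) (s : Finset (ZMod n) × ZMod n) : Prop :=
  s.1 ∈ T.tiles ∧ s.2 ∈ s.1 ∧ arcLen x (cnext n s.1 s.2) < arcLen x s.2

theorem StrandEnds.of_reflTransGen (h : StrandEnds T s y)
    (hss' : Relation.ReflTransGen (StrandStep T) s s') : StrandEnds T s' y := by
  induction hss' with
  | refl => exact h
  | tail _ hstep ih =>
    cases ih with
    | terminate hend => exact absurd (hstep.symm.trans hend) Sum.inl_ne_inr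
    | step hstep' hend => rwa [Sum.inl_injective (hstep'.symm.trans hstep)] at hend

lemma startTile_spec (T : PolygonTiling n) (x : ZMod n) :
    startTile n T x ∈ T.tiles ∧ IsEdge n (startTile n T x) x (x + 1) :=
  (Classical.choose_spec (T.boundary_edge x)).1

variable [NeZero n]

lemma Oriented.arcLen_of_scottStep_eq_inr (hs : Oriented T x s) (h : scottStep n T s = Sum.inr y) :
    arcLen x (cnext n s.1 s.2) + (s.1.card - 2) ≤ arcLen x y ∧
      (s.1.card = 3 → arcLen x y = arcLen x (cnext n s.1 s.2) + 1) := by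
  obtain ⟨Q, a⟩ := s
  obtain ⟨hQ, ha, hb⟩ : Q ∈ T.tiles ∧ a ∈ Q ∧ arcLen x (cnext n Q a) < arcLen x a := hs
  dsimp only
  obtain ⟨hppp, -, hcount, htri⟩ := arcLen_cprev_cprev_bounds ha (T.three_le Q hQ) hb
  simp only [scottStep] at h
  split_ifs at h with hterm hex
  · cases h
    have hy := arcLen_add_one (hppp.trans_le arcLen_le)
    rw [← hterm] at hy
    refine ⟨by omega, fun h3 => by rw [hy, htri h3]⟩
  · have hp : cprev n Q a ∈ Q := (cprev_spec_s11 ha).1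
    have hedge : IsEdge n Q (cprev n Q (cprev n Q a)) (cprev n Q a) :=
      ⟨(cprev_spec_s11 hp).1, hp, fun h => (h ▸ hppp).false, (cnext_cprev hp).symm⟩
    obtain ⟨Q', ⟨hQ', hQ'Q, hedge'⟩, -⟩ := T.diag_shared Q hQ _ _ hedge hterm
    exact absurd ⟨Q', hQ', hQ'Q, hedge'⟩ hex

lemma Oriented.of_strandStep (hs : Oriented T x s) (h : StrandStep T s s') :
    Oriented T x s' ∧ arcLen x s'.2 < arcLen x s.2 ∧
      arcLen x (cnext n s.1 s.2) + (s.1.card - 3) ≤ arcLen x (cnext n s'.1 s'.2) ∧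
      (s.1.card = 3 → cnext n s'.1 s'.2 = cnext n s.1 s.2) := by
  obtain ⟨Q, a⟩ := s
  obtain ⟨hQ, ha, hb⟩ : Q ∈ T.tiles ∧ a ∈ Q ∧ arcLen x (cnext n Q a) < arcLen x a := hs
  dsimp only
  obtain ⟨hppp, hpa, hcount, htri⟩ := arcLen_cprev_cprev_bounds ha (T.three_le Q hQ) hb
  simp only [StrandStep, scottStep] at h
  split_ifs at h with hterm hex
  cases h
  obtain ⟨hQ', -, hp, -, -, hnext⟩ := Classical.choose_spec hex
  refine ⟨⟨hQ', hp, ?_⟩, hpa, ?_⟩ <;> dsimp only <;> rw [← hnext]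
  exacts [hppp, ⟨hcount, htri⟩]

theorem Oriented.of_reflTransGen (hs : Oriented T x s)
    (hss' : Relation.ReflTransGen (StrandStep T) s s') : Oriented T x s' := by
  induction hss' with
  | refl => exact hs
  | tail _ hstep ih => exact (ih.of_strandStep hstep).1

theorem StrandEnds.add_card_sub_two_le (h : StrandEnds T s y) (hs : Oriented T x s) :
    arcLen x (cnext n s.1 s.2) + (s.1.card - 2) ≤ arcLen x y := by
  induction h with
  | terminate hstep => exact (hs.arcLen_of_scottStep_eq_inr hstep).1
  | step hstep _ ih =>
    obtain ⟨hs', -, hle, -⟩ := hs.of_strandStep hstep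
    have := ih hs'
    have := T.three_le _ hs'.1
    omega

theorem StrandEnds.arcLen_eq_of_isTriangulation (hT : IsTriangulation n T) (h : StrandEnds T s y)
    (hs : Oriented T x s) : arcLen x y = arcLen x (cnext n s.1 s.2) + 1 := by
  induction h with
  | terminate hstep => exact (hs.arcLen_of_scottStep_eq_inr hstep).2 (hT _ hs.1)
  | step hstep _ ih =>
    obtain ⟨hs', -, -, heq⟩ := hs.of_strandStep hstep
    rw [ih hs', heq (hT _ hs.1)]

lemma Oriented.notMem_of_forall_exists_lt {V : Finset (Finset (ZMod n))} (hs : Oriented T x s)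
    (hV : ∀ R ∈ V, ∃ c ∈ R, arcLen x s.2 < arcLen x c) : s.1 ∉ V := fun hmem => by
  obtain ⟨c, hc, hlt⟩ := hV _ hmem
  have := (arcLen_mem_Icc_of_arcLen_cnext_lt hs.2.2 hc).2
  omega

/-- `V` collects tiles already crossed; as the strand never returns to them, the fuel
`T.tiles.card` of `scott` suffices. -/
theorem strandEnds_scottRun {fuel : ℕ} {V : Finset (Finset (ZMod n))} (hs : Oriented T x s)
    (hV : V ⊆ T.tiles) (hfuel : T.tiles.card ≤ fuel + V.card)
    (hVs : ∀ R ∈ V, ∃ c ∈ R, arcLen x s.2 < arcLen x c) :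
    StrandEnds T s (scottRun n T fuel s) := by
  induction fuel generalizing s V with
  | zero =>
    have := Finset.card_le_card (Finset.insert_subset hs.1 hV)
    rw [Finset.card_insert_of_notMem (hs.notMem_of_forall_exists_lt hVs)] at this
    omega
  | succ f ih =>
    rcases hstep : scottStep n T s with s' | y
    · obtain ⟨hs', hlt, -⟩ := hs.of_strandStep hstep
      simp only [scottRun, hstep]
      refine .step hstep (ih hs' (Finset.insert_subset hs.1 hV) ?_ ?_)
      · rw [Finset.card_insert_of_notMem (hs.notMem_of_forall_exists_lt hVs)]
        omega
      · simp only [Finset.mem_insert, forall_eq_or_imp]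
        exact ⟨⟨s.2, hs.2.1, hlt⟩,
          fun R hR => (hVs R hR).imp fun c hc => ⟨hc.1, hlt.trans hc.2⟩⟩
    · simp only [scottRun, hstep]
      exact .terminate hstep

lemma oriented_startTile (T : PolygonTiling n) (x : ZMod n) :
    Oriented T x (startTile n T x, x) := by
  obtain ⟨hmem, hx, -, hne, hnext⟩ := startTile_spec T x
  refine ⟨hmem, hx, ?_⟩
  have := arcLen_lt_iff.mpr hne.symm
  dsimp only
  rw [← hnext, arcLen_add_one_self, arcLen_self]
  rwa [arcLen_add_one_self] at this

lemma strandEnds_scott (T : PolygonTiling n) (x : ZMod n) :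
    StrandEnds T (startTile n T x, x) (scott n T x) :=
  strandEnds_scottRun (oriented_startTile T x) (Finset.empty_subset _) (by simp) (by simp)

end Strands

section Reach

variable {n : ℕ} [NeZero n] {T : PolygonTiling n} {Q : Finset (ZMod n)} {a : ZMod n}

/-- Across a diagonal `(a, b)` of `Q` the strand of the neighbouring tile `Q'` running parallel to
`[a, b]` enters `Q` at `a`; it entered `Q'` through an edge spanning a shorter arc than `(a, b)`. -/
lemma exists_strandStep_into (hQ : Q ∈ T.tiles) (ha : a ∈ Q) (hdiag : cnext n Q a ≠ a + 1) :
    ∃ Q' ∈ T.tiles, ∃ a' ∈ Q', StrandStep T (Q', a') (Q, a) ∧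
      arcLen a' (cnext n Q' a') < arcLen a (cnext n Q a) := by
  set b := cnext n Q a
  obtain ⟨c, hc, hca⟩ := Q.exists_mem_ne ((by norm_num : 1 < 3).trans_le (T.three_le Q hQ)) a
  have hedge : IsEdge n Q a b := isEdge_cnext ha hc hca
  obtain ⟨Q', ⟨hQ', hQ'Q, hbQ', haQ', hba, hnext⟩, -⟩ := T.diag_shared Q hQ a b hedge hdiag
  have hab : a ≠ b + 1 := fun h => by
    obtain ⟨d, hd, hda, hdb⟩ := Q.exists_mem_ne_ne (T.three_le Q hQ) a b
    have hle := arcLen_le_of_cnext_eq hedge.2.2.2.symm hedge.2.2.1 hd hdb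
    rw [h, arcLen_add_one_self] at hle
    refine hda (arcLen_injective b ?_)
    rw [h, arcLen_add_one_self]
    exact le_antisymm hle one_le_arcLen
  set a' := cnext n Q' a
  obtain ⟨d, hd, hda, hdb⟩ := Q'.exists_mem_ne_ne (T.three_le Q' hQ') a b
  have hdb' : arcLen a d < arcLen a b :=
    (arcLen_le_of_cnext_eq hnext.symm hba hd hda).lt_of_ne fun h => hdb (arcLen_injective a h)
  have ha'd : arcLen a a' ≤ arcLen a d := (cnext_spec_s11 haQ').2 d hd
  have hb' : arcLen a' (cnext n Q' a') ≤ arcLen a' b := (cnext_spec_s11 hbQ').2 b hbQ'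
  refine ⟨Q', hQ', a', (cnext_spec_s11 haQ').1, ?_, ?_⟩
  · have hp : cprev n Q' a' = a := cprev_cnext haQ'
    have hpp : cprev n Q' a = b := by
      have := cprev_cnext (Q := Q') hbQ'
      rwa [← hnext] at this
    obtain ⟨Q'', -, huniq⟩ := T.diag_shared Q' hQ' b a ⟨hbQ', haQ', hba, hnext⟩ hab
    have hex : ∃ R, R ∈ T.tiles ∧ R ≠ Q' ∧ IsEdge n R a b := ⟨Q, hQ, hQ'Q.symm, hedge⟩
    simp only [StrandStep, scottStep, hp, hpp, if_neg hab, dif_pos hex]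
    rw [huniq _ (Classical.choose_spec hex), huniq Q ⟨hQ, hQ'Q.symm, hedge⟩]
  · have := (arcLen_le : arcLen a' b ≤ n)
    have := (one_le_arcLen : 1 ≤ arcLen a a')
    rcases arcLen_add_arcLen a a' b with h | h <;> omega

theorem exists_reflTransGen_startTile (hQ : Q ∈ T.tiles) (ha : a ∈ Q) :
    ∃ x, Relation.ReflTransGen (StrandStep T) (startTile n T x, x) (Q, a) := by
  induction hm : arcLen a (cnext n Q a) using Nat.strong_induction_on generalizing Q a with
  | _ m ih =>
  by_cases hb : cnext n Q a = a + 1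
  · obtain ⟨c, hc, hca⟩ := Q.exists_mem_ne ((by norm_num : 1 < 3).trans_le (T.three_le Q hQ)) a
    have hQ_eq : Q = startTile n T a :=
      (T.boundary_edge a).unique ⟨hQ, hb ▸ isEdge_cnext ha hc hca⟩ (startTile_spec T a)
    exact ⟨a, hQ_eq ▸ .refl⟩
  · obtain ⟨Q', hQ', a', ha', hstep, hlt⟩ := exists_strandStep_into hQ ha hb
    obtain ⟨x, hx⟩ := ih _ (hm ▸ hlt) hQ' ha' rfl
    exact ⟨x, hx.tail hstep⟩

end Reach

theorem stmt11 (n : ℕ) (hn : 3 ≤ n) (T : PolygonTiling n) :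
    IsTriangulation n T ↔ scott n T = fun i => i + 2 := by
  have : NeZero n := ⟨by omega⟩
  have harcLen_two (x : ZMod n) : arcLen x (x + 2) = 2 := by
    have h₁ := arcLen_add_one_self x
    rw [show x + 2 = x + 1 + 1 by ring, arcLen_add_one (by omega), h₁]
  have hstart (x : ZMod n) : cnext n (startTile n T x) x = x + 1 :=
    (startTile_spec T x).2.2.2.2.symm
  constructor
  · intro hT
    funext x
    have h := (strandEnds_scott T x).arcLen_eq_of_isTriangulation hT (oriented_startTile T x)
    dsimp only at h
    rw [hstart, arcLen_add_one_self] at h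
    exact arcLen_injective x (h.trans (harcLen_two x).symm)
  · intro hscott Q hQ
    have hQ3 := T.three_le Q hQ
    obtain ⟨a, ha⟩ := Finset.card_pos.mp (by omega : 0 < Q.card)
    obtain ⟨x, hx⟩ := exists_reflTransGen_startTile hQ ha
    have h := ((strandEnds_scott T x).of_reflTransGen hx).add_card_sub_two_le
      ((oriented_startTile T x).of_reflTransGen hx)
    rw [hscott, harcLen_two] at h
    have := (one_le_arcLen : 1 ≤ arcLen x (cnext n Q a))
    dsimp only at h
    omega
end
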